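/- With Ψ_ξ and Ψ_η as above, for every 𝔣 ∈ C(X_{Ã}, ℤ) the difference (Ψ_η ∘ Ψ_ξ)(𝔣) − 𝔣 equals 𝔣₀∘σ_{Ã} − 𝔣₀, where 𝔣₀(x̃) = 𝔣(x̃) if x̃₁ = 0 and 𝔣₀(x̃) = 0 otherwise. Consequently Ψ_ξ and Ψ_η induce mutually inverse isomorphisms between the quotient groups H^{Ã} = C(X_{Ã},ℤ)/{g − g∘σ_{Ã}} and H^A = C(X_A,ℤ)/{ξ − ξ∘σ_A}. -/

import Mathlib

/-- One-sided shift space over symbols `{1, …, N}`. -/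
def ShiftSpace (N : ℕ) (A : ℕ → ℕ → ℕ) : Set (ℕ → ℕ) :=
  {x | (∀ n, 1 ≤ x n ∧ x n ≤ N) ∧ ∀ n, A (x n) (x (n + 1)) = 1}

/-- One-sided shift space over symbols `{0, 1, …, N}`. -/
def ShiftSpace0 (N : ℕ) (A : ℕ → ℕ → ℕ) : Set (ℕ → ℕ) :=
  {x | (∀ n, x n ≤ N) ∧ ∀ n, A (x n) (x (n + 1)) = 1}

/-- The shift on raw sequences. -/
def rawShift (x : ℕ → ℕ) : ℕ → ℕ := fun n => x (n + 1)

/-- The expansion `Ã` of the matrix `A` at the vertex `1`, over the symbol set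
`{0, 1, …, N}`: `Ã(1,0) = 1`, `Ã(1,j) = 0` for `j ≥ 1`; `Ã(0,0) = 0`,
`Ã(0,j) = A(1,j)` for `j ≥ 1`; `Ã(i,0) = 0`, `Ã(i,j) = A(i,j)` for `i ≥ 2`. -/
def expandAt1 (A : ℕ → ℕ → ℕ) : ℕ → ℕ → ℕ := fun i j =>
  if i = 1 then (if j = 0 then 1 else 0)
  else if i = 0 then (if j = 0 then 0 else A 1 j)
  else if j = 0 then 0 else A i j

/-- The position in `ξ(x)` of the `n`-th letter of `x`, where `ξ` replaces
every symbol `1` by the word `(1,0)`. -/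
def posf (x : ℕ → ℕ) : ℕ → ℕ
  | 0 => 0
  | n + 1 => posf x n + (if x n = 1 then 2 else 1)

/-- The map `ξ : X_A → X_Ã` replacing every occurrence of the symbol `1`
by the word `(1,0)`. -/
noncomputable def xiMap (x : ℕ → ℕ) : ℕ → ℕ := fun m =>
  letI := Classical.dec (∃ n, posf x n = m)
  if h : ∃ n, posf x n = m then x h.choose else 0

/-- The map `η : X_Ã → X_A` deleting every occurrence of the symbol `0`. -/
noncomputable def etaMap (x : ℕ → ℕ) : ℕ → ℕ := fun m =>
  x (Nat.nth (fun i => x i ≠ 0) m)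

/-- The map `Ψ_ξ : C(X_Ã, ℤ) → C(X_A, ℤ)`. -/
noncomputable def PsiXi (f : (ℕ → ℕ) → ℤ) : (ℕ → ℕ) → ℤ := fun x =>
  if x 0 = 1 then f (xiMap x) + f (rawShift (xiMap x)) else f (xiMap x)

/-- The map `Ψ_η : C(X_A, ℤ) → C(X_Ã, ℤ)`. -/
noncomputable def PsiEta (f : (ℕ → ℕ) → ℤ) : (ℕ → ℕ) → ℤ := fun x =>
  if x 0 = 0 then 0 else f (etaMap x)

/-!
A point of `X_Ã` is a sequence in which `0` occurs exactly after each `1`. For such a point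
not starting with `0`, the nonzero letters sit at the positions `Nat.nth (· ≠ 0)`, and these are
exactly the positions `posf` at which `ξ` writes the letters of `η x̃`; hence `ξ (η x̃) = x̃`.
Unfolding `Ψ_η Ψ_ξ 𝔣` then gives `𝔣 x̃ + 𝔣 (σ x̃)` if `x̃₀ = 1`, `𝔣 x̃` if `x̃₀ ≥ 2` and `0` if
`x̃₀ = 0`, which is `𝔣 + 𝔣₀ ∘ σ - 𝔣₀`; and `𝔣₀` is continuous because the cylinder `[0]` is
clopen.
-/

theorem ContinuousOn.ite_of_isClopen {X M : Type*} [TopologicalSpace X] [TopologicalSpace M]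
    {p : X → Prop} [DecidablePred p] {f g : X → M} {s : Set X} (hp : IsClopen {x | p x})
    (hf : ContinuousOn f s) (hg : ContinuousOn g s) :
    ContinuousOn (fun x => if p x then f x else g x) s :=
  ContinuousOn.if (by simp [hp.frontier_eq]) (hf.mono Set.inter_subset_left)
    (hg.mono Set.inter_subset_left)

theorem isClopen_setOf_apply_eq {ι α : Type*} [TopologicalSpace α] [DiscreteTopology α]
    (i : ι) (a : α) : IsClopen {x : ι → α | x i = a} :=
  (isClopen_discrete {a}).preimage (continuous_apply i)

theorem Nat.nth_add_one_eq_of_gap {p : ℕ → Prop} (hp : (Set.ofPred p).Infinite) {n k : ℕ}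
    (hk0 : 0 < k) (hk : p (nth p n + k)) (hgap : ∀ j, 0 < j → j < k → ¬p (nth p n + j)) :
    nth p (n + 1) = nth p n + k := by
  have hlt : nth p n < nth p (n + 1) := (nth_lt_nth hp).2 n.lt_add_one
  have hle : nth p (n + 1) ≤ nth p n + k := by
    by_contra! h
    have := le_nth_of_lt_nth_succ h hk
    omega
  obtain ⟨j, hj⟩ := Nat.exists_eq_add_of_lt hlt
  by_contra hne
  refine hgap (j + 1) (by omega) (by omega) ?_
  rw [← add_assoc, ← hj]
  exact nth_mem_of_infinite hp _

theorem posf_strictMono (y : ℕ → ℕ) : StrictMono (posf y) :=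
  strictMono_nat_of_lt_succ fun n => by simp only [posf]; split <;> omega

theorem xiMap_posf (y : ℕ → ℕ) (n : ℕ) : xiMap y (posf y n) = y n := by
  have h : ∃ k, posf y k = posf y n := ⟨n, rfl⟩
  simp only [xiMap, dif_pos h]
  rw [(posf_strictMono y).injective h.choose_spec]

theorem xiMap_of_notMem_range {y : ℕ → ℕ} {m : ℕ} (hm : m ∉ Set.range (posf y)) :
    xiMap y m = 0 :=
  dif_neg hm

theorem eq_zero_iff_of_mem_shiftSpace0_expandAt1 {N : ℕ} {A : ℕ → ℕ → ℕ} {x : ℕ → ℕ}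
    (hx : x ∈ ShiftSpace0 N (expandAt1 A)) (n : ℕ) : x (n + 1) = 0 ↔ x n = 1 := by
  have h := hx.2 n
  unfold expandAt1 at h
  split_ifs at h <;> omega

section ExpandedSequence

variable {x : ℕ → ℕ} (hx : ∀ n, x (n + 1) = 0 ↔ x n = 1)
include hx

theorem infinite_setOf_ne_zero : {i | x i ≠ 0}.Infinite := by
  refine Set.infinite_of_forall_exists_gt fun a => ?_
  by_cases h : x (a + 1) = 0
  · refine ⟨a + 2, fun h2 => ?_, by omega⟩
    have := (hx (a + 1)).1 h2
    omega
  · exact ⟨a + 1, h, by omega⟩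

theorem nth_ne_zero_eq_posf_etaMap (hx0 : x 0 ≠ 0) :
    Nat.nth (fun i => x i ≠ 0) = posf (etaMap x) := by
  set p : ℕ → Prop := fun i => x i ≠ 0
  have hinf : (Set.ofPred p).Infinite := infinite_setOf_ne_zero hx
  funext n
  induction n with
  | zero => exact Nat.nth_zero_of_zero hx0
  | succ n ih =>
    have heta : etaMap x n = x (Nat.nth p n) := rfl
    rw [posf, ← ih, heta]
    set i := Nat.nth p n
    by_cases h1 : x i = 1
    · have hz : x (i + 1) = 0 := (hx i).2 h1
      have hnz : p (i + 2) := fun h => by have := (hx (i + 1)).1 h; omega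
      rw [if_pos h1]
      refine Nat.nth_add_one_eq_of_gap hinf two_pos hnz fun j hj hj2 => ?_
      obtain rfl : j = 1 := by omega
      exact not_not.2 hz
    · rw [if_neg h1]
      exact Nat.nth_add_one_eq_of_gap hinf one_pos (fun h => h1 ((hx i).1 h)) (by omega)

theorem xiMap_etaMap (hx0 : x 0 ≠ 0) : xiMap (etaMap x) = x := by
  set p : ℕ → Prop := fun i => x i ≠ 0
  have hinf : (Set.ofPred p).Infinite := infinite_setOf_ne_zero hx
  have hposf := nth_ne_zero_eq_posf_etaMap hx hx0
  funext m
  by_cases hm : x m = 0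
  · rw [hm, xiMap_of_notMem_range]
    rintro ⟨k, rfl⟩
    exact (hposf ▸ Nat.nth_mem_of_infinite hinf k) hm
  · have hcount : Nat.nth p (Nat.count p m) = m := Nat.nth_count hm
    calc xiMap (etaMap x) m = xiMap (etaMap x) (posf (etaMap x) (Nat.count p m)) := by
          rw [← hposf, hcount]
      _ = x m := by rw [xiMap_posf]; exact congrArg x hcount

theorem PsiEta_PsiXi_sub_self (f : (ℕ → ℕ) → ℤ) :
    PsiEta (PsiXi f) x - f x =
      (if rawShift x 0 = 0 then f (rawShift x) else 0) - (if x 0 = 0 then f x else 0) := by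
  have hshift : rawShift x 0 = x 1 := rfl
  by_cases hx0 : x 0 = 0
  · have hx1 : x 1 ≠ 0 := fun h => by have := (hx 0).1 h; omega
    simp [PsiEta, hx0, hshift, hx1]
  · have heta0 : etaMap x 0 = x 0 := congrArg x (Nat.nth_zero_of_zero hx0)
    simp only [PsiEta, PsiXi, if_neg hx0, heta0, xiMap_etaMap hx hx0, hshift, hx 0]
    split_ifs <;> ring

end ExpandedSequence

/-- `(Ψ_η ∘ Ψ_ξ)(𝔣) − 𝔣 = 𝔣₀∘σ_Ã − 𝔣₀` where `𝔣₀` agrees with `𝔣`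
on points starting with `0` and vanishes elsewhere; consequently the difference
is a coboundary, so `Ψ_ξ` and `Ψ_η` induce mutually inverse isomorphisms
between `H^Ã` and `H^A`. -/
theorem PsiEta_PsiXi (N : ℕ) (A : ℕ → ℕ → ℕ)
    (f : (ℕ → ℕ) → ℤ) (hf : ContinuousOn f (ShiftSpace0 N (expandAt1 A))) :
    (∀ x ∈ ShiftSpace0 N (expandAt1 A),
      PsiEta (PsiXi f) x - f x =
        (if rawShift x 0 = 0 then f (rawShift x) else 0) -
          (if x 0 = 0 then f x else 0)) ∧
    (∃ g : (ℕ → ℕ) → ℤ, ContinuousOn g (ShiftSpace0 N (expandAt1 A)) ∧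
      ∀ x ∈ ShiftSpace0 N (expandAt1 A),
        PsiEta (PsiXi f) x - f x = g (rawShift x) - g x) := by
  have key : ∀ x ∈ ShiftSpace0 N (expandAt1 A),
      PsiEta (PsiXi f) x - f x =
        (if rawShift x 0 = 0 then f (rawShift x) else 0) - (if x 0 = 0 then f x else 0) :=
    fun x hx => PsiEta_PsiXi_sub_self (eq_zero_iff_of_mem_shiftSpace0_expandAt1 hx) f
  exact ⟨key, fun x => if x 0 = 0 then f x else 0,
    ContinuousOn.ite_of_isClopen (isClopen_setOf_apply_eq 0 0) hf continuousOn_const, key⟩
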